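/- arXiv:1610.04505 — 6 statements merged into one kernel-verified Lean document; each statement's English description precedes it below -/
import Mathlib

section
/- Let O be an order in a number field K, m ⊆ O a nonzero ideal contained in the conductor of O, and x ∈ K^×. If the fractional O-ideal xO can be written as a·b^{-1} with a, b integral O-ideals coprime to m, then x = x₀/x_∞ with x₀ ∈ O coprime to m and x_∞ ∈ O satisfying x_∞ ≡ 1 (mod m). -/
/-!
Choose `y ∈ b` and `u ∈ a` with `y ≡ u ≡ 1 (mod m)`, and put `x_∞ = y`, `x₀ = x y ∈ x b = a`.
Writing `u = x β` with `β ∈ b` gives `x₀ β = u y ≡ 1 (mod m)`, so `x₀` is invertible modulo `m`.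
-/

namespace Ideal

variable {R : Type*} [CommRing R] {I m : Ideal R}

theorem exists_mem_sub_one_mem_of_sup_eq_top (h : I ⊔ m = ⊤) : ∃ y ∈ I, y - 1 ∈ m := by
  obtain ⟨y, hy, z, hz, hyz⟩ := Submodule.mem_sup.mp (h ▸ Submodule.mem_top : (1 : R) ∈ I ⊔ m)
  refine ⟨y, hy, ?_⟩
  rw [show y - 1 = -z by rw [← hyz]; ring]
  exact m.neg_mem hz

theorem mul_sub_one_mem_of_sub_one_mem {u y : R} (hu : u - 1 ∈ m) (hy : y - 1 ∈ m) :
    u * y - 1 ∈ m := by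
  rw [show u * y - 1 = u * (y - 1) + (u - 1) by ring]
  exact m.add_mem (m.mul_mem_left u hy) hu

theorem span_singleton_sup_eq_top_of_mul_sub_one_mem {w β : R} (h : w * β - 1 ∈ m) :
    span {w} ⊔ m = ⊤ := by
  rw [eq_top_iff_one, show (1 : R) = w * β - (w * β - 1) by ring]
  exact sub_mem (mem_sup_left (mul_mem_right β _ (mem_span_singleton_self w)))
    (mem_sup_right h)

end Ideal

namespace FractionalIdeal

variable {R P : Type*} [CommRing R] {S : Submonoid R} [CommRing P] [Algebra R P]
  [IsLocalization S P] {x : P} {a b : Ideal R}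

theorem exists_mem_algebraMap_eq_mul_of_mem
    (hab : spanSingleton S x * (b : FractionalIdeal S P) = a) {y : R} (hy : y ∈ b) :
    ∃ w ∈ a, algebraMap R P w = x * algebraMap R P y := by
  have hxy : x * algebraMap R P y ∈ (a : FractionalIdeal S P) :=
    hab ▸ mem_singleton_mul.mpr ⟨_, mem_coeIdeal_of_mem S hy, rfl⟩
  exact (mem_coeIdeal S).mp hxy

theorem exists_mem_mul_algebraMap_eq_of_mem
    (hab : spanSingleton S x * (b : FractionalIdeal S P) = a) {u : R} (hu : u ∈ a) :
    ∃ β ∈ b, x * algebraMap R P β = algebraMap R P u := by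
  obtain ⟨β, hβb, hβ⟩ := mem_singleton_mul.mp (hab ▸ mem_coeIdeal_of_mem S hu :
    algebraMap R P u ∈ spanSingleton S x * (b : FractionalIdeal S P))
  obtain ⟨β', hβ', rfl⟩ := (mem_coeIdeal S).mp hβb
  exact ⟨β', hβ', hβ.symm⟩

end FractionalIdeal

theorem unit_modstar_of_coprime_factorisation_general (K : Type*) [Field K]
    (O : Subalgebra ℤ K) [IsFractionRing O K] (m : Ideal O) (x : K)
    (h : ∃ a b : Ideal O, a ⊔ m = ⊤ ∧ b ⊔ m = ⊤ ∧
      FractionalIdeal.spanSingleton (nonZeroDivisors O) x *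
        (b : FractionalIdeal (nonZeroDivisors O) K) =
        (a : FractionalIdeal (nonZeroDivisors O) K)) :
    ∃ x₀ xinf : O, Ideal.span {x₀} ⊔ m = ⊤ ∧ xinf - 1 ∈ m ∧
      (x₀ : K) = x * (xinf : K) := by
  obtain ⟨a, b, ha, hb, hab⟩ := h
  obtain ⟨y, hyb, hy⟩ := Ideal.exists_mem_sub_one_mem_of_sup_eq_top hb
  obtain ⟨u, hua, hu⟩ := Ideal.exists_mem_sub_one_mem_of_sup_eq_top ha
  obtain ⟨w, -, hw⟩ := FractionalIdeal.exists_mem_algebraMap_eq_mul_of_mem hab hyb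
  obtain ⟨β, -, hβ⟩ := FractionalIdeal.exists_mem_mul_algebraMap_eq_of_mem hab hua
  have hwβ : w * β = u * y := IsFractionRing.injective O K <| by
    rw [map_mul, map_mul, hw, ← hβ]
    ring
  have hw_unit : w * β - 1 ∈ m := hwβ ▸ Ideal.mul_sub_one_mem_of_sub_one_mem hu hy
  exact ⟨w, y, Ideal.span_singleton_sup_eq_top_of_mul_sub_one_mem hw_unit, hy, hw⟩

/-- Let `O` be an order in a number field `K`, `m ⊆ O` a nonzero ideal contained in
the conductor of `O`, and `x ∈ K^×`.  If the fractional `O`-ideal `xO` can be written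
as `a·b⁻¹` with `a`, `b` integral `O`-ideals coprime to `m` (equivalently, `x·b = a`),
then `x = x₀/x_∞` with `x₀ ∈ O` coprime to `m` and `x_∞ ∈ O` with `x_∞ ≡ 1 (mod m)`. -/
theorem unit_modstar_of_coprime_factorisation (K : Type*) [Field K] [NumberField K]
    (O : Subalgebra ℤ K) (hfg : O.toSubmodule.FG)
    (hfull : Submodule.span ℚ (O : Set K) = ⊤) [IsFractionRing O K]
    (m : Ideal O) (hm0 : m ≠ ⊥)
    (hcond : ∀ y ∈ m, ∀ z ∈ integralClosure ℤ K, (y : K) * z ∈ O)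
    (x : K) (hx : x ≠ 0)
    (h : ∃ a b : Ideal O, a ⊔ m = ⊤ ∧ b ⊔ m = ⊤ ∧
      FractionalIdeal.spanSingleton (nonZeroDivisors O) x *
        (b : FractionalIdeal (nonZeroDivisors O) K) =
        (a : FractionalIdeal (nonZeroDivisors O) K)) :
    ∃ x₀ xinf : O, Ideal.span {x₀} ⊔ m = ⊤ ∧ xinf - 1 ∈ m ∧
      (x₀ : K) = x * (xinf : K) :=
  unit_modstar_of_coprime_factorisation_general K O m x h
end

section
/- Let K₀ be a totally real field with ring of integers O_{K₀}, m ⊆ O_{K₀} a nonzero ideal, K a CM field with maximal real subfield K₀, and z ∈ K \ K₀. Then there exist A, B, C ∈ O_{K₀} with A totally positive, A z² + B z + C = 0, and A·O_{K₀} + B·O_{K₀} + C·O_{K₀} + m = O_{K₀}. -/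
/-!
Write `z² + b z + c = 0` with `b, c ∈ K₀` and let `D = (1, b, c)⁻¹`, an integral ideal. For
`A ∈ D` the products `A b`, `A c` are integral and `(A, A b, A c) D = (A)`, so cancelling `D`
shows `(A, A b, A c) + m = 1` as soon as `(A) + D m = D`. The `A` with this property include a
coset `a + D m` (nonempty because in a Dedekind domain `D = D m + (a)` for some `a`), and
adding `k ν²` with `0 ≠ ν ∈ D m` and `k` large makes `A` totally positive.
-/

open NumberField nonZeroDivisors Polynomial FractionalIdeal Ideal

theorem Ideal.span_singleton_add_sup_of_mem {R : Type*} [CommRing R] {I : Ideal R} {a μ : R}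
    (hμ : μ ∈ I) :
    span {a + μ} ⊔ I = span {a} ⊔ I := by
  refine le_antisymm (sup_le ?_ le_sup_right) (sup_le ?_ le_sup_right) <;>
    rw [span_singleton_le_iff_mem]
  · exact add_mem (mem_sup_left (mem_span_singleton_self a)) (mem_sup_right hμ)
  · simpa using sub_mem (mem_sup_left (mem_span_singleton_self (a + μ))) (mem_sup_right hμ)

section Dedekind

variable {R : Type*} [CommRing R] [IsDedekindDomain R]

theorem Ideal.sup_eq_top_of_mul_eq_span_singleton {I D m : Ideal R} {a : R} (hD : D ≠ ⊥)
    (hID : I * D = span {a}) (ha : span {a} ⊔ D * m = D) : I ⊔ m = ⊤ := by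
  refine mul_right_cancel₀ hD ?_
  rw [sup_mul, hID, top_mul, mul_comm m, ha]

variable {F : Type*} [Field F] [Algebra R F] [IsFractionRing R F]

theorem exists_ideal_clearing_denominators (b c : F) :
    ∃ D : Ideal R, D ≠ ⊥ ∧ ∀ a ∈ D, ∃ B C : R,
      algebraMap R F B = algebraMap R F a * b ∧ algebraMap R F C = algebraMap R F a * c ∧
      (span {a} ⊔ span {B} ⊔ span {C}) * D = span {a} := by
  set J : FractionalIdeal R⁰ F := 1 ⊔ spanSingleton R⁰ b ⊔ spanSingleton R⁰ c
  have h1J : 1 ≤ J := le_sup_left.trans le_sup_left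
  have hJ0 : J ≠ 0 := fun h => one_ne_zero (le_bot_iff.mp (h ▸ h1J))
  obtain ⟨D, hD⟩ := le_one_iff_exists_coeIdeal.mp
    ((inv_anti_mono (one_ne_zero' (FractionalIdeal R⁰ F)) hJ0 h1J).trans_eq inv_one)
  have hJD : J * D = 1 := hD ▸ mul_inv_cancel₀ hJ0
  refine ⟨D, fun h => ?_, fun a ha => ?_⟩
  · rw [h, coeIdeal_bot, mul_zero] at hJD
    exact zero_ne_one hJD
  have hmul : ∀ y ∈ J, ∃ Y : R, algebraMap R F Y = algebraMap R F a * y := by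
    have haJ : algebraMap R F a ∈ J⁻¹ := hD ▸ (mem_coeIdeal R⁰).mpr ⟨a, ha, rfl⟩
    exact fun y hy => (mem_one_iff R⁰).mp ((mem_inv_iff hJ0).mp haJ y hy)
  have hbJ : spanSingleton R⁰ b ≤ J := le_sup_right.trans le_sup_left
  have hcJ : spanSingleton R⁰ c ≤ J := le_sup_right
  obtain ⟨B, hB⟩ := hmul b (hbJ (mem_spanSingleton_self R⁰ b))
  obtain ⟨C, hC⟩ := hmul c (hcJ (mem_spanSingleton_self R⁰ c))
  refine ⟨B, C, hB, hC, (coeIdeal_inj (K := F)).mp ?_⟩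
  simp only [coeIdeal_mul, coeIdeal_sup, coeIdeal_span_singleton, hB, hC,
    ← spanSingleton_mul_spanSingleton]
  calc _ = spanSingleton R⁰ (algebraMap R F a) * (J * D) := by simp only [J, sup_eq_add]; ring
    _ = _ := by rw [hJD, mul_one]

theorem exists_semiprimitive_multiplier (b c : F) {m : Ideal R} (hm : m ≠ ⊥) :
    ∃ (N : Ideal R) (a : R), N ≠ ⊥ ∧ ∀ μ ∈ N, ∃ B C : R,
      algebraMap R F B = algebraMap R F (a + μ) * b ∧
      algebraMap R F C = algebraMap R F (a + μ) * c ∧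
      span {a + μ} ⊔ span {B} ⊔ span {C} ⊔ m = ⊤ := by
  obtain ⟨D, hD, hclear⟩ := exists_ideal_clearing_denominators (R := R) b c
  obtain ⟨a, ha⟩ := IsDedekindDomain.exists_sup_span_eq Ideal.mul_le_left (mul_ne_zero hD hm)
  refine ⟨D * m, a, mul_ne_zero hD hm, fun μ hμ => ?_⟩
  have haD : a ∈ D := ha ▸ mem_sup_right (mem_span_singleton_self a)
  obtain ⟨B, C, hB, hC, hID⟩ := hclear (a + μ) (add_mem haD (Ideal.mul_le_left hμ))
  refine ⟨B, C, hB, hC, sup_eq_top_of_mul_eq_span_singleton hD hID ?_⟩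
  rw [span_singleton_add_sup_of_mem hμ, sup_comm, ha]

end Dedekind

theorem exists_sq_add_mul_add_eq_zero_of_finrank_eq_two {F L : Type*} [Field F] [Ring L]
    [Algebra F L] (h2 : Module.finrank F L = 2) (z : L) :
    ∃ b c : F, z ^ 2 + algebraMap F L b * z + algebraMap F L c = 0 := by
  have : Module.Finite F L := Module.finite_of_finrank_pos (by omega)
  have hp := Algebra.aeval_self_charpoly_lmul (R := F) z
  rw [(LinearMap.charpoly_monic _).as_sum, LinearMap.charpoly_natDegree, h2] at hp
  refine ⟨(Algebra.lmul F L z).charpoly.coeff 1, (Algebra.lmul F L z).charpoly.coeff 0, ?_⟩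
  simp only [Finset.sum_range_succ, Finset.sum_range_zero, map_add, map_pow, aeval_X,
    aeval_C, map_mul, pow_zero, pow_one, mul_one, zero_add] at hp
  rw [← hp]
  abel

theorem exists_nat_forall_pos_add_mul_sq {F : Type*} [DivisionRing F] [Finite (F →+* ℝ)]
    (a : F) {ν : F} (hν : ν ≠ 0) : ∃ k : ℕ, ∀ φ : F →+* ℝ, 0 < φ (a + k * ν ^ 2) := by
  suffices ∀ᶠ k : ℕ in Filter.atTop, ∀ φ : F →+* ℝ, 0 < φ (a + k * ν ^ 2) from this.exists
  refine Filter.eventually_all.mpr fun φ => ?_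
  have hpos : 0 < φ ν ^ 2 := by positivity [map_ne_zero φ |>.mpr hν]
  simp only [map_add, map_mul, map_natCast, map_pow]
  exact (Filter.tendsto_atTop_add_const_left _ _
    (tendsto_natCast_atTop_atTop.atTop_mul_const hpos)).eventually_gt_atTop 0

theorem exists_semiprimitive_quadratic_general
    (K₀ K : Type*) [Field K₀] [NumberField K₀] [Field K] [Algebra K₀ K]
    (h2 : Module.finrank K₀ K = 2)
    (m : Ideal (𝓞 K₀)) (hm0 : m ≠ ⊥)
    (z : K) :
    ∃ A B C : 𝓞 K₀, (∀ φ : K₀ →+* ℝ, 0 < φ (A : K₀)) ∧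
      algebraMap (𝓞 K₀) K A * z ^ 2 + algebraMap (𝓞 K₀) K B * z +
        algebraMap (𝓞 K₀) K C = 0 ∧
      Ideal.span {A} ⊔ Ideal.span {B} ⊔ Ideal.span {C} ⊔ m = ⊤ := by
  obtain ⟨b, c, hbc⟩ := exists_sq_add_mul_add_eq_zero_of_finrank_eq_two h2 z
  obtain ⟨N, a, hN, hsemi⟩ := exists_semiprimitive_multiplier (R := 𝓞 K₀) b c hm0
  obtain ⟨ν, hνN, hν⟩ := Submodule.exists_mem_ne_zero_of_ne_bot hN
  obtain ⟨k, hk⟩ := exists_nat_forall_pos_add_mul_sq (a : K₀) (ν := ν) (by simpa using hν)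
  obtain ⟨B, C, hB, hC, hcop⟩ :=
    hsemi (k * ν ^ 2) (N.mul_mem_left _ (N.pow_mem_of_mem hνN 2 two_pos))
  refine ⟨a + k * ν ^ 2, B, C, by simpa using hk, ?_, hcop⟩
  simp only [IsScalarTower.algebraMap_apply (𝓞 K₀) K₀ K, hB, hC, map_mul]
  linear_combination algebraMap K₀ K (algebraMap (𝓞 K₀) K₀ (a + k * ν ^ 2)) * hbc

/-- Let `K₀` be totally real, `m ⊆ 𝓞 K₀` a nonzero ideal, `K` a CM field with maximal
real subfield `K₀`, and `z ∈ K \ K₀`.  Then there are `A, B, C ∈ 𝓞 K₀` with `A`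
totally positive, `A z² + B z + C = 0` and `(A) + (B) + (C) + m = 𝓞 K₀`
(semiprimitivity modulo `m`). -/
theorem exists_semiprimitive_quadratic
    (K₀ K : Type*) [Field K₀] [NumberField K₀] [Field K] [NumberField K] [Algebra K₀ K]
    (htr : ∀ v : InfinitePlace K₀, v.IsReal)
    (hti : ∀ v : InfinitePlace K, v.IsComplex)
    (h2 : Module.finrank K₀ K = 2)
    (m : Ideal (𝓞 K₀)) (hm0 : m ≠ ⊥)
    (z : K) (hz : z ∉ (algebraMap K₀ K).range) :
    ∃ A B C : 𝓞 K₀, (∀ φ : K₀ →+* ℝ, 0 < φ (A : K₀)) ∧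
      algebraMap (𝓞 K₀) K A * z ^ 2 + algebraMap (𝓞 K₀) K B * z +
        algebraMap (𝓞 K₀) K C = 0 ∧
      Ideal.span {A} ⊔ Ideal.span {B} ⊔ Ideal.span {C} ⊔ m = ⊤ :=
  exists_semiprimitive_quadratic_general K₀ K h2 m hm0 z
end

section
/- Let K be a CM field with maximal real subfield K₀, and let z ∈ K \ K₀ be a root of A X² + B X + C with A, B, C ∈ O_{K₀}. Set d = gcd(A·O_{K₀}, B·O_{K₀}, C·O_{K₀}) and b = z·O_{K₀} + O_{K₀}. Then the ring of multipliers {x ∈ K : x·b ⊆ b} of b equals d^{-1}·A z + O_{K₀}, where d^{-1} = {x ∈ K₀ : x·d ⊆ O_{K₀}}. -/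
/-!
Since `b = 𝓞 K₀ z + 𝓞 K₀` is generated by `z` and `1`, `x` multiplies `b` into itself iff
`x ∈ b` and `x z ∈ b`. Write `x = u z + v` and `x z = p z + q`. Using `A z² = -B z - C`, the
element `A x z` equals both `(A v - B u) z - C u` and `A p z + A q`; as `z, 1` are independent
over `K₀`, `(u / A)·A = u`, `(u / A)·B = v - p` and `(u / A)·C = -q` are integral, so
`a = u / A ∈ d⁻¹` and `x = a A z + v`. Conversely, for `a ∈ d⁻¹` the same identity shows
`x = a A z + t` satisfies `x z = (t - a B) z - a C ∈ b`.
-/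

open NumberField Submodule

theorem Submodule.forall_mul_mem_span_iff {R L : Type*} [CommSemiring R] [Semiring L]
    [Algebra R L] {s : Set L} {x : L} :
    (∀ y ∈ span R s, x * y ∈ span R s) ↔ ∀ y ∈ s, x * y ∈ span R s :=
  ⟨fun h y hy => h y (subset_span hy), fun h _ hy =>
    (span_le (p := (span R s).comap (LinearMap.mulLeft R x))).2 h hy⟩

theorem Ideal.forall_mul_algebraMap_mem_range_iff {R F : Type*} [CommRing R] [CommRing F]
    [Algebra R F] {s : Set R} {a : F} :
    (∀ y ∈ Ideal.span s, a * algebraMap R F y ∈ (algebraMap R F).range) ↔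
      ∀ y ∈ s, a * algebraMap R F y ∈ (algebraMap R F).range := by
  refine ⟨fun h y hy => h y (subset_span hy), fun h y hy => ?_⟩
  induction hy using Submodule.span_induction with
  | mem y hy => exact h y hy
  | zero => simp
  | add y₁ y₂ _ _ h₁ h₂ => simpa only [map_add, mul_add] using add_mem h₁ h₂
  | smul r y _ hy =>
    simpa only [smul_eq_mul, map_mul, mul_left_comm] using mul_mem (RingHom.mem_range_self _ r) hy

section QuadraticLattice

variable {R F L : Type*} [CommRing R] [Field F] [Field L] [Algebra R F] [Algebra R L]
  [Algebra F L] [IsScalarTower R F L] {z : L}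

theorem mem_span_pair_one_iff {x : L} :
    x ∈ span R {z, 1} ↔ ∃ s t : R, algebraMap R L s * z + algebraMap R L t = x := by
  simp only [mem_span_pair, Algebra.smul_def, mul_one]

theorem linearIndependent_pair_one_of_notMem_range [FaithfulSMul R F]
    (hz : z ∉ (algebraMap F L).range) : LinearIndependent R ![z, 1] := by
  refine LinearIndependent.restrict_scalars' (K := F) R ?_
  rw [LinearIndependent.pair_symm_iff, LinearIndependent.pair_iff' one_ne_zero]
  intro a ha
  exact hz ⟨a, by rw [← ha, Algebra.algebraMap_eq_smul_one]⟩

theorem exists_of_mul_mem_span_pair_one [FaithfulSMul R F] (hz : z ∉ (algebraMap F L).range)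
    {A B C : R} (hA : A ≠ 0)
    (hroot : algebraMap R L A * z ^ 2 + algebraMap R L B * z + algebraMap R L C = 0)
    {x : L} (hxz : x * z ∈ span R {z, 1}) (hx : x ∈ span R {z, 1}) :
    ∃ a : F, (a * algebraMap R F A ∈ (algebraMap R F).range ∧
      a * algebraMap R F B ∈ (algebraMap R F).range ∧
      a * algebraMap R F C ∈ (algebraMap R F).range) ∧
      ∃ t : R, x = algebraMap F L a * (algebraMap R L A * z) + algebraMap R L t := by
  obtain ⟨u, v, rfl⟩ := mem_span_pair_one_iff.1 hx
  obtain ⟨p, q, hpq⟩ := mem_span_pair_one_iff.1 hxz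
  have hAxz : algebraMap R L (v * A - u * B) * z + algebraMap R L (-(u * C))
      = algebraMap R L (A * p) * z + algebraMap R L (A * q) := by
    simp only [map_mul, map_sub, map_neg]
    linear_combination algebraMap R L A * hpq.symm - algebraMap R L u * hroot
  obtain ⟨hB, hC⟩ := (linearIndependent_pair_one_of_notMem_range hz).eq_of_pair
    (by simpa only [Algebra.smul_def, mul_one] using hAxz)
  have hA' : algebraMap R F A ≠ 0 :=
    (map_ne_zero_iff _ (FaithfulSMul.algebraMap_injective R F)).2 hA
  refine ⟨algebraMap R F u / algebraMap R F A,
    ⟨⟨u, by field_simp⟩, ⟨v - p, ?_⟩, ⟨-q, ?_⟩⟩, v, ?_⟩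
  · have hB' := congrArg (algebraMap R F) hB
    simp only [map_mul, map_sub] at hB' ⊢
    field_simp
    linear_combination hB'
  · have hC' := congrArg (algebraMap R F) hC
    simp only [map_mul, map_neg] at hC' ⊢
    field_simp
    linear_combination hC'
  · have hA'' : algebraMap F L (algebraMap R F A) ≠ 0 := (map_ne_zero _).2 hA'
    simp only [IsScalarTower.algebraMap_apply R F L, map_div₀]
    field_simp

theorem mul_mem_and_mem_span_pair_one_iff [FaithfulSMul R F] (hz : z ∉ (algebraMap F L).range)
    {A B C : R} (hA : A ≠ 0)
    (hroot : algebraMap R L A * z ^ 2 + algebraMap R L B * z + algebraMap R L C = 0) {x : L} :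
    x * z ∈ span R {z, 1} ∧ x ∈ span R {z, 1} ↔
      ∃ a : F, (a * algebraMap R F A ∈ (algebraMap R F).range ∧
        a * algebraMap R F B ∈ (algebraMap R F).range ∧
        a * algebraMap R F C ∈ (algebraMap R F).range) ∧
        ∃ t : R, x = algebraMap F L a * (algebraMap R L A * z) + algebraMap R L t := by
  refine ⟨fun ⟨hxz, hx⟩ => exists_of_mul_mem_span_pair_one hz hA hroot hxz hx, ?_⟩
  rintro ⟨a, ⟨⟨α, hα⟩, ⟨β, hβ⟩, ⟨γ, hγ⟩⟩, t, rfl⟩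
  simp only [IsScalarTower.algebraMap_apply R F L] at hroot ⊢
  refine ⟨mem_span_pair_one_iff.2 ⟨t - β, -γ, ?_⟩, mem_span_pair_one_iff.2 ⟨α, t, ?_⟩⟩
  · simp only [IsScalarTower.algebraMap_apply R F L, map_sub, map_neg, hβ, hγ, map_mul]
    linear_combination -(algebraMap F L a) * hroot
  · simp only [IsScalarTower.algebraMap_apply R F L, hα, map_mul]
    ring

end QuadraticLattice

theorem multiplier_ring_eq_general (K₀ K : Type*) [Field K₀] [Field K] [Algebra K₀ K]
    (z : K) (hz : z ∉ (algebraMap K₀ K).range)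
    (A B C : 𝓞 K₀) (hA : A ≠ 0)
    (hroot : algebraMap (𝓞 K₀) K A * z ^ 2 + algebraMap (𝓞 K₀) K B * z +
      algebraMap (𝓞 K₀) K C = 0) :
    {x : K | ∀ y ∈ Submodule.span (𝓞 K₀) {z, 1}, x * y ∈ Submodule.span (𝓞 K₀) {z, 1}}
      = {x : K | ∃ a : K₀,
          (∀ y ∈ Ideal.span ({A, B, C} : Set (𝓞 K₀)), a * (y : K₀) ∈
            (algebraMap (𝓞 K₀) K₀).range) ∧
          ∃ t : 𝓞 K₀, x = algebraMap K₀ K a * (algebraMap (𝓞 K₀) K A * z) +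
            algebraMap (𝓞 K₀) K t} := by
  ext x
  simp only [Set.mem_ofPred_eq, forall_mul_mem_span_iff, Set.forall_mem_insert,
    Set.mem_singleton_iff, forall_eq, mul_one, RingOfIntegers.coe_eq_algebraMap,
    Ideal.forall_mul_algebraMap_mem_range_iff]
  exact mul_mem_and_mem_span_pair_one_iff hz hA hroot

/-- Let `K/K₀` be a CM extension and `z ∈ K \ K₀` a root of `A X² + B X + C` with
`A, B, C ∈ 𝓞 K₀`, `A ≠ 0`.  With `d = (A, B, C)` and `b = z·𝓞 K₀ + 𝓞 K₀`, the ring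
of multipliers `{x ∈ K : x·b ⊆ b}` equals `d⁻¹·A z + 𝓞 K₀`,
where `d⁻¹ = {x ∈ K₀ : x·d ⊆ 𝓞 K₀}`. -/
theorem multiplier_ring_eq (K₀ K : Type*) [Field K₀] [NumberField K₀]
    [Field K] [NumberField K] [Algebra K₀ K]
    (htr : ∀ v : InfinitePlace K₀, v.IsReal)
    (hti : ∀ v : InfinitePlace K, v.IsComplex)
    (h2 : Module.finrank K₀ K = 2)
    (z : K) (hz : z ∉ (algebraMap K₀ K).range)
    (A B C : 𝓞 K₀) (hA : A ≠ 0)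
    (hroot : algebraMap (𝓞 K₀) K A * z ^ 2 + algebraMap (𝓞 K₀) K B * z +
      algebraMap (𝓞 K₀) K C = 0) :
    {x : K | ∀ y ∈ Submodule.span (𝓞 K₀) {z, 1}, x * y ∈ Submodule.span (𝓞 K₀) {z, 1}}
      = {x : K | ∃ a : K₀,
          (∀ y ∈ Ideal.span ({A, B, C} : Set (𝓞 K₀)), a * (y : K₀) ∈
            (algebraMap (𝓞 K₀) K₀).range) ∧
          ∃ t : 𝓞 K₀, x = algebraMap K₀ K a * (algebraMap (𝓞 K₀) K A * z) +
            algebraMap (𝓞 K₀) K t} :=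
  multiplier_ring_eq_general K₀ K z hz A B C hA hroot
end

section
/- Let K₀ be a totally real number field with different ideal D_{K₀} = λ O_{K₀} generated by a purely 'imaginary-compatible' element λ, K a CM field with maximal real subfield K₀, and z ∈ K \ K₀ with ξ = ((z − z̄)λ)^{-1}. Let B₁ = (b_{1,1}, …, b_{1,g}) be a Z-basis of O_{K₀} and B₂ = (b_{2,1}, …, b_{2,g}) such that (−λ^{-1}b_{2,1}, …, −λ^{-1}b_{2,g}) is the trace-dual basis of B₁. Then the 2g elements (z b_{1,1}, …, z b_{1,g}, b_{2,1}, …, b_{2,g}) form a symplectic basis of the O_{K₀}-module b = z O_{K₀} + O_{K₀} with respect to the alternating form E_ξ(x, y) = Tr_{K/Q}(ξ x̄ y); that is, E_ξ(z b_{1,i}, z b_{1,j}) = 0, E_ξ(b_{2,i}, b_{2,j}) = 0, and E_ξ(z b_{1,i}, b_{2,j}) = δ_{ij}. -/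
/-!
A quadratic extension `K/K₀` in characteristic zero is Galois with group `{1, σ}`, so
`Tr_{K/K₀} w = w + σ w` and `σ² = 1`. As `σ ξ = -ξ`, this turns `Tr_{K/K₀}(ξ · σx · y)` into
`ξ (σx · y - x · σy)`, which vanishes when `x, y` both lie in `z K₀` or both in `K₀`, and equals
`ξ (σz - z) a b = -λ⁻¹ a b` for `x = z a`, `y = b`; taking `Tr_{K₀/ℚ}` gives the dual-basis pairing.
-/

open NumberField

namespace Algebra.IsQuadraticExtension

variable {F L : Type*} [Field F] [Field L] [Algebra F L] [IsQuadraticExtension F L] [IsGalois F L]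

theorem card_galoisGroup : Nat.card Gal(L/F) = 2 :=
  finrank_eq_two F L ▸ IsGalois.card_aut_eq_finrank F L

theorem galoisGroup_apply_apply (σ : Gal(L/F)) (x : L) : σ (σ x) = x := by
  have hσ2 : σ ^ 2 = 1 := card_galoisGroup (F := F) (L := L) ▸ pow_card_eq_one'
  simpa [pow_two] using congrArg (· x) hσ2

theorem eq_one_or_eq_of_ne_one {σ : Gal(L/F)} (hσ : σ ≠ 1) (τ : Gal(L/F)) : τ = 1 ∨ τ = σ := by
  obtain ⟨_, -, huniq⟩ := (Nat.card_eq_two_iff' (1 : Gal(L/F))).mp card_galoisGroup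
  exact or_iff_not_imp_left.mpr fun hτ => (huniq τ hτ).trans (huniq σ hσ).symm

theorem algebraMap_trace {σ : Gal(L/F)} (hσ : σ ≠ 1) (x : L) :
    algebraMap F L (Algebra.trace F L x) = x + σ x := by
  rw [trace_eq_sum_automorphisms, Fintype.sum_eq_add 1 σ hσ.symm]
  · rfl
  · rintro τ ⟨h1, hσ'⟩
    exact absurd ((eq_one_or_eq_of_ne_one hσ τ).resolve_left h1) hσ'

theorem apply_ne_self {σ : Gal(L/F)} (hσ : σ ≠ 1) {z : L} (hz : z ∉ (algebraMap F L).range) :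
    σ z ≠ z := by
  intro hfix
  refine hz ((IsGalois.mem_range_algebraMap_iff_fixed z).mpr fun τ => ?_)
  rcases eq_one_or_eq_of_ne_one hσ τ with rfl | rfl
  · rfl
  · exact hfix

theorem algebraMap_trace_mul_apply_mul {σ : Gal(L/F)} (hσ : σ ≠ 1) {ξ : L} (hξ : σ ξ = -ξ)
    (x y : L) :
    algebraMap F L (Algebra.trace F L (ξ * σ x * y)) = ξ * (σ x * y - x * σ y) := by
  rw [algebraMap_trace hσ, map_mul, map_mul, hξ, galoisGroup_apply_apply]
  ring

theorem trace_mul_apply_mul_eq (R : Type*) [Field R] [Algebra R F] [Algebra R L]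
    [IsScalarTower R F L] [FiniteDimensional R F] {σ : Gal(L/F)} (hσ : σ ≠ 1) {ξ : L}
    (hξ : σ ξ = -ξ) {x y : L} {c : F} (h : ξ * (σ x * y - x * σ y) = algebraMap F L c) :
    Algebra.trace R L (ξ * σ x * y) = Algebra.trace R F c := by
  rw [← Algebra.trace_trace (S := F),
    (algebraMap F L).injective ((algebraMap_trace_mul_apply_mul hσ hξ x y).trans h)]

end Algebra.IsQuadraticExtension

open Algebra.IsQuadraticExtension

theorem symplectic_basis_of_trace_dual_general
    (K₀ K : Type*) [Field K₀] [NumberField K₀] [Field K] [NumberField K] [Algebra K₀ K]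
    (h2 : Module.finrank K₀ K = 2)
    (σ : K ≃ₐ[K₀] K) (hσ : σ ≠ AlgEquiv.refl)
    (lam : 𝓞 K₀)
    (g : ℕ) (b₁ : Module.Basis (Fin g) ℤ (𝓞 K₀)) (b₂ : Fin g → 𝓞 K₀)
    (hdual : ∀ i j : Fin g,
      Algebra.trace ℚ K₀ (-((lam : K₀)⁻¹) * (b₂ j : K₀) * ((b₁ i : 𝓞 K₀) : K₀))
        = if i = j then 1 else 0)
    (z : K) (hz : z ∉ (algebraMap K₀ K).range) :
    (∀ i j : Fin g,
      Algebra.trace ℚ K (((z - σ z) * algebraMap (𝓞 K₀) K lam)⁻¹ *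
        σ (z * algebraMap (𝓞 K₀) K (b₁ i)) * (z * algebraMap (𝓞 K₀) K (b₁ j))) = 0) ∧
    (∀ i j : Fin g,
      Algebra.trace ℚ K (((z - σ z) * algebraMap (𝓞 K₀) K lam)⁻¹ *
        σ (algebraMap (𝓞 K₀) K (b₂ i)) * algebraMap (𝓞 K₀) K (b₂ j)) = 0) ∧
    (∀ i j : Fin g,
      Algebra.trace ℚ K (((z - σ z) * algebraMap (𝓞 K₀) K lam)⁻¹ *
        σ (z * algebraMap (𝓞 K₀) K (b₁ i)) * algebraMap (𝓞 K₀) K (b₂ j))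
        = if i = j then 1 else 0) := by
  have : Algebra.IsQuadraticExtension K₀ K := ⟨h2⟩
  have hfix (a : 𝓞 K₀) : σ (algebraMap (𝓞 K₀) K a) = algebraMap (𝓞 K₀) K a := by
    rw [IsScalarTower.algebraMap_apply (𝓞 K₀) K₀ K, σ.commutes]
  have hzσ : z - σ z ≠ 0 := sub_ne_zero.mpr (apply_ne_self hσ hz).symm
  set ξ := ((z - σ z) * algebraMap (𝓞 K₀) K lam)⁻¹ with hξ_def
  have hξ : σ ξ = -ξ := by
    rw [hξ_def, map_inv₀, map_mul, map_sub, galoisGroup_apply_apply, hfix, ← inv_neg]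
    ring
  refine ⟨fun i j => ?_, fun i j => ?_, fun i j => ?_⟩
  · rw [trace_mul_apply_mul_eq ℚ hσ hξ (c := 0) (by simp only [map_mul, hfix, map_zero]; ring),
      map_zero]
  · rw [trace_mul_apply_mul_eq ℚ hσ hξ (c := 0) (by simp only [hfix, map_zero]; ring), map_zero]
  · rw [trace_mul_apply_mul_eq ℚ hσ hξ (c := -(lam : K₀)⁻¹ * b₂ j * b₁ i), hdual]
    simp only [map_mul, map_neg, map_inv₀, hfix, ← IsScalarTower.algebraMap_apply, hξ_def]
    field_simp
    ring

/-- Let `K₀` be totally real of degree `g` with different `D_{K₀} = λ 𝓞 K₀`, `K/K₀` a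
CM extension with conjugation `σ`, `z ∈ K \ K₀` and `ξ = ((z - z̄)λ)⁻¹`.  If `B₁` is a
`ℤ`-basis of `𝓞 K₀` and `B₂` is such that `-λ⁻¹ B₂` is the trace-dual basis of `B₁`,
then `(z B₁ | B₂)` is a symplectic basis of `b = z 𝓞 K₀ + 𝓞 K₀` for
`E_ξ(x, y) = Tr_{K/ℚ}(ξ x̄ y)`. -/
theorem symplectic_basis_of_trace_dual
    (K₀ K : Type*) [Field K₀] [NumberField K₀] [Field K] [NumberField K] [Algebra K₀ K]
    (htr : ∀ v : InfinitePlace K₀, v.IsReal)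
    (hti : ∀ v : InfinitePlace K, v.IsComplex)
    (h2 : Module.finrank K₀ K = 2)
    (σ : K ≃ₐ[K₀] K) (hσ : σ ≠ AlgEquiv.refl)
    (lam : 𝓞 K₀) (hlam : differentIdeal ℤ (𝓞 K₀) = Ideal.span {lam})
    (g : ℕ) (b₁ : Module.Basis (Fin g) ℤ (𝓞 K₀)) (b₂ : Fin g → 𝓞 K₀)
    (hdual : ∀ i j : Fin g,
      Algebra.trace ℚ K₀ (-((lam : K₀)⁻¹) * (b₂ j : K₀) * ((b₁ i : 𝓞 K₀) : K₀))
        = if i = j then 1 else 0)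
    (z : K) (hz : z ∉ (algebraMap K₀ K).range) :
    (∀ i j : Fin g,
      Algebra.trace ℚ K (((z - σ z) * algebraMap (𝓞 K₀) K lam)⁻¹ *
        σ (z * algebraMap (𝓞 K₀) K (b₁ i)) * (z * algebraMap (𝓞 K₀) K (b₁ j))) = 0) ∧
    (∀ i j : Fin g,
      Algebra.trace ℚ K (((z - σ z) * algebraMap (𝓞 K₀) K lam)⁻¹ *
        σ (algebraMap (𝓞 K₀) K (b₂ i)) * algebraMap (𝓞 K₀) K (b₂ j)) = 0) ∧
    (∀ i j : Fin g,
      Algebra.trace ℚ K (((z - σ z) * algebraMap (𝓞 K₀) K lam)⁻¹ *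
        σ (z * algebraMap (𝓞 K₀) K (b₁ i)) * algebraMap (𝓞 K₀) K (b₂ j))
        = if i = j then 1 else 0) :=
  symplectic_basis_of_trace_dual_general K₀ K h2 σ hσ lam g b₁ b₂ hdual z hz
end

section
/- Let K₀ be a totally real number field, K/K₀ a CM extension with conjugation z ↦ z̄ and D_{K₀} = λ O_{K₀}. Let z₁, z₂ ∈ K \ K₀ be roots of quadratic polynomials A_i X² + B_i X + C_i ∈ O_{K₀}[X] (i = 1, 2) such that b_i = z_i O_{K₀} + O_{K₀} have the same multiplier ring O. Set δ_i = 2 A_i z_i + B_i and ε = δ₁/δ₂. Then ε ∈ K₀ and ε O_{K₀} = d₁ d₂^{-1}, where d_i = gcd(A_i, B_i, C_i). In particular, if the two polynomials have equal discriminants B₁² − 4A₁C₁ = B₂² − 4A₂C₂ and ε is totally positive, then δ₁ = δ₂ and d₁ = d₂. -/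
/-!
Write `δ = 2 A z + B`, so that `δ² = B² - 4 A C`. The conjugate `σ z` is the other root of
`A X² + B X + C`, hence `δ = A (z - σ z)` and `σ δ = -δ`; in particular `ε = δ₁ / δ₂` is fixed
by `σ` and lies in `K₀`. The multiplier ring of `z 𝓞 + 𝓞` is `𝓞 + d⁻¹ A z` with `d = (A, B, C)`,
and `x ↦ x - σ x` maps it onto `d⁻¹ δ`. Equal multiplier rings therefore give
`d₁⁻¹ δ₁ = d₂⁻¹ δ₂`, i.e. `ε d₁⁻¹ = d₂⁻¹`. Equal discriminants give `ε² = 1`, and a square root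
of `1` that is positive under a real embedding is `1`.
-/

open NumberField Module
open scoped nonZeroDivisors

section QuadraticExtension

variable {K₀ K : Type*} [Field K₀] [Field K] [Algebra K₀ K] {z : K}

theorem eq_zero_of_algebraMap_mul_add_eq_zero (hz : z ∉ (algebraMap K₀ K).range) {p q : K₀}
    (h : algebraMap K₀ K p * z + algebraMap K₀ K q = 0) : p = 0 ∧ q = 0 := by
  by_cases hp : p = 0
  · subst hp
    simpa using h
  · refine absurd ⟨-q / p, ?_⟩ hz
    have : algebraMap K₀ K p ≠ 0 := by simpa using hp
    rw [map_div₀, map_neg]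
    field_simp
    linear_combination -h

theorem span_pair_one_eq_top (h2 : finrank K₀ K = 2) (hz : z ∉ (algebraMap K₀ K).range) :
    Submodule.span K₀ {z, 1} = ⊤ := by
  have hli : LinearIndependent K₀ ![z, 1] :=
    LinearIndependent.pair_iff.mpr fun s t hst ↦ eq_zero_of_algebraMap_mul_add_eq_zero hz
      (by simpa [Algebra.smul_def] using hst)
  simpa [Matrix.range_cons, Matrix.range_empty, Set.pair_comm] using
    hli.span_eq_top_of_card_eq_finrank (by simp [h2])

theorem apply_ne_self_of_notMem_range (h2 : finrank K₀ K = 2) {σ : K ≃ₐ[K₀] K}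
    (hσ : σ ≠ AlgEquiv.refl) (hz : z ∉ (algebraMap K₀ K).range) : σ z ≠ z := by
  intro hσz
  refine hσ (AlgEquiv.ext fun x ↦ ?_)
  have hx : x ∈ Submodule.span K₀ {z, 1} := by rw [span_pair_one_eq_top h2 hz]; trivial
  obtain ⟨p, q, rfl⟩ := Submodule.mem_span_pair.mp hx
  simp [hσz]

end QuadraticExtension

theorem mul_add_add_eq_zero_of_quadratic_eq_zero {F : Type*} [Field F] {a b c x y : F}
    (hx : a * x ^ 2 + b * x + c = 0) (hy : a * y ^ 2 + b * y + c = 0) (hxy : x ≠ y) :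
    a * (x + y) + b = 0 := by
  have : (x - y) * (a * (x + y) + b) = 0 := by linear_combination hx - hy
  exact (mul_eq_zero.mp this).resolve_left (sub_ne_zero.mpr hxy)

section SqrtDisc

variable {R K₀ K : Type*} [CommRing R] [Field K₀] [Field K] [Algebra K₀ K] [Algebra R K]
  {A B C : R} {z : K}

def sqrtDisc (A B : R) (z : K) : K := 2 * algebraMap R K A * z + algebraMap R K B

theorem sqrtDisc_sq (hroot : algebraMap R K A * z ^ 2 + algebraMap R K B * z +
    algebraMap R K C = 0) : sqrtDisc A B z ^ 2 = algebraMap R K (discrim A B C) := by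
  simp only [sqrtDisc, discrim, map_sub, map_mul, map_pow, map_ofNat]
  linear_combination 4 * algebraMap R K A * hroot

theorem sqrtDisc_eq_mul_sub {w : K} (hsum : algebraMap R K A * (z + w) + algebraMap R K B = 0) :
    sqrtDisc A B z = algebraMap R K A * (z - w) := by
  unfold sqrtDisc; linear_combination hsum

variable [Algebra R K₀] [IsScalarTower R K₀ K] (σ : K ≃ₐ[K₀] K)

theorem AlgEquiv.apply_algebraMap_of_isScalarTower (r : R) :
    σ (algebraMap R K r) = algebraMap R K r :=
  (σ.restrictScalars R).commutes r

theorem mul_add_conj_add_eq_zero (hroot : algebraMap R K A * z ^ 2 + algebraMap R K B * z +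
    algebraMap R K C = 0) (hσz : σ z ≠ z) :
    algebraMap R K A * (z + σ z) + algebraMap R K B = 0 := by
  refine mul_add_add_eq_zero_of_quadratic_eq_zero hroot ?_ hσz.symm
  simpa only [map_add, map_mul, map_pow, AlgEquiv.apply_algebraMap_of_isScalarTower, map_zero]
    using congrArg σ hroot

theorem apply_sqrtDisc (hsum : algebraMap R K A * (z + σ z) + algebraMap R K B = 0) :
    σ (sqrtDisc A B z) = -sqrtDisc A B z := by
  simp only [sqrtDisc, map_add, map_mul, map_ofNat, AlgEquiv.apply_algebraMap_of_isScalarTower]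
  linear_combination 2 * hsum

theorem sub_apply_algebraMap_add_mul (hsum : algebraMap R K A * (z + σ z) + algebraMap R K B = 0)
    (p : R) (u : K₀) :
    (algebraMap R K p + algebraMap K₀ K u * algebraMap R K A * z) -
      σ (algebraMap R K p + algebraMap K₀ K u * algebraMap R K A * z) =
      algebraMap K₀ K u * sqrtDisc A B z := by
  simp only [map_add, map_mul, AlgEquiv.commutes, AlgEquiv.apply_algebraMap_of_isScalarTower,
    sqrtDisc_eq_mul_sub hsum]
  ring

end SqrtDisc

section MultiplierSet

variable {R K : Type*} [CommRing R] [CommRing K] [Algebra R K]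

def multiplierSet (M : Submodule R K) : Set K := {x | ∀ y ∈ M, x * y ∈ M}

theorem mem_multiplierSet_span_iff {s : Set K} {x : K} :
    x ∈ multiplierSet (Submodule.span R s) ↔ ∀ y ∈ s, x * y ∈ Submodule.span R s :=
  Submodule.span_le (p := (Submodule.span R s).comap (LinearMap.mulLeft R x))

end MultiplierSet

section FractionalIdeal

variable {R K₀ : Type*} [CommRing R] [Field K₀] [Algebra R K₀] [IsFractionRing R K₀]

theorem coeIdeal_span_ne_zero_of_mem {s : Set R} {a : R} (ha : a ∈ s) (ha0 : a ≠ 0) :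
    (Ideal.span s : FractionalIdeal R⁰ K₀) ≠ 0 :=
  FractionalIdeal.coeIdeal_ne_zero.mpr fun h ↦ ha0 (Ideal.span_eq_bot.mp h a ha)

variable [IsDomain R]

theorem mem_inv_coeIdeal_span_iff {s : Set R} (hs : (Ideal.span s : FractionalIdeal R⁰ K₀) ≠ 0)
    {u : K₀} :
    u ∈ (Ideal.span s : FractionalIdeal R⁰ K₀)⁻¹ ↔
      ∀ a ∈ s, u * algebraMap R K₀ a ∈ (1 : FractionalIdeal R⁰ K₀) := by
  rw [FractionalIdeal.mem_inv_iff hs]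
  let N : Ideal R :=
    (1 : FractionalIdeal R⁰ K₀).coeToSubmodule.comap (u • Algebra.linearMap R K₀)
  change _ ↔ s ⊆ N
  rw [← Ideal.span_le]
  constructor
  · exact fun h a ha ↦ h _ (FractionalIdeal.mem_coeIdeal_of_mem _ ha)
  · rintro h _ ⟨a, ha, rfl⟩
    exact h ha

end FractionalIdeal

section MultiplierRing

variable {R K₀ K : Type*} [CommRing R] [IsDomain R] [Field K₀] [Field K] [Algebra R K₀]
  [IsFractionRing R K₀] [Algebra K₀ K] [Algebra R K] [IsScalarTower R K₀ K] {A B C : R} {z : K}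

theorem mem_multiplierSet_span_pair_one_iff (hz : z ∉ (algebraMap K₀ K).range) (hA : A ≠ 0)
    (hroot : algebraMap R K A * z ^ 2 + algebraMap R K B * z + algebraMap R K C = 0) {x : K} :
    x ∈ multiplierSet (Submodule.span R {z, 1}) ↔
      ∃ p : R, ∃ u ∈ (Ideal.span {A, B, C} : FractionalIdeal R⁰ K₀)⁻¹,
        x = algebraMap R K p + algebraMap K₀ K u * algebraMap R K A * z := by
  have hspan := coeIdeal_span_ne_zero_of_mem (K₀ := K₀) (Set.mem_insert A {B, C}) hA
  have hιA : algebraMap R K₀ A ≠ 0 := fun h ↦ hA (IsFractionRing.to_map_eq_zero_iff.mp h)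
  simp only [mem_multiplierSet_span_iff, mem_inv_coeIdeal_span_iff hspan, Set.forall_mem_insert,
    Set.mem_singleton_iff, forall_eq, FractionalIdeal.mem_one_iff, Submodule.mem_span_pair,
    Algebra.smul_def, mul_one, IsScalarTower.algebraMap_apply R K₀ K] at hroot ⊢
  set ι := algebraMap R K₀
  set g := algebraMap K₀ K
  constructor
  · rintro ⟨⟨a', b', hxz⟩, ⟨a, b, hx⟩⟩
    have hcoeff :
        g (ι A * ι a' - ι b * ι A + ι a * ι B) * z + g (ι A * ι b' + ι a * ι C) = 0 := by
      simp only [map_sub, map_mul, map_add]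
      linear_combination g (ι A) * hxz - g (ι A) * z * hx + g (ι a) * hroot
    obtain ⟨hcz, hc1⟩ := eq_zero_of_algebraMap_mul_add_eq_zero hz hcoeff
    refine ⟨b, ι a / ι A, ⟨⟨a, by field_simp⟩, ⟨b - a', ?_⟩, ⟨-b', ?_⟩⟩, ?_⟩
    · rw [map_sub]; field_simp; linear_combination -hcz
    · rw [map_neg]; field_simp; linear_combination -hc1
    · rw [← hx, map_div₀, div_mul_cancel₀ _ (by simpa using hιA)]; ring
  · rintro ⟨p, u, ⟨⟨a, ha⟩, ⟨b, hb⟩, ⟨c, hc⟩⟩, rfl⟩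
    refine ⟨⟨p - b, -c, ?_⟩, ⟨a, p, ?_⟩⟩
    · simp only [map_sub, map_neg, hb, hc, map_mul]
      linear_combination -g u * hroot
    · rw [ha, map_mul]; ring


variable (σ : K ≃ₐ[K₀] K)

theorem sqrtDisc_ne_zero (hA : A ≠ 0)
    (hroot : algebraMap R K A * z ^ 2 + algebraMap R K B * z + algebraMap R K C = 0)
    (hσz : σ z ≠ z) : sqrtDisc A B z ≠ 0 := by
  have hA' : algebraMap R K A ≠ 0 := by
    simpa [IsScalarTower.algebraMap_apply R K₀ K, IsFractionRing.to_map_eq_zero_iff] using hA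
  rw [sqrtDisc_eq_mul_sub (mul_add_conj_add_eq_zero σ hroot hσz)]
  exact mul_ne_zero hA' (sub_ne_zero.mpr hσz.symm)

theorem mul_mem_inv_of_multiplierSet_eq {A' B' C' : R} {z' : K}
    (hz : z ∉ (algebraMap K₀ K).range) (hz' : z' ∉ (algebraMap K₀ K).range)
    (hA : A ≠ 0) (hA' : A' ≠ 0)
    (hroot : algebraMap R K A * z ^ 2 + algebraMap R K B * z + algebraMap R K C = 0)
    (hroot' : algebraMap R K A' * z' ^ 2 + algebraMap R K B' * z' + algebraMap R K C' = 0)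
    (hσz : σ z ≠ z) (hσz' : σ z' ≠ z')
    (hmult : multiplierSet (Submodule.span R {z, 1}) = multiplierSet (Submodule.span R {z', 1}))
    {e : K₀} (he : algebraMap K₀ K e * sqrtDisc A' B' z' = sqrtDisc A B z)
    {u : K₀} (hu : u ∈ (Ideal.span {A, B, C} : FractionalIdeal R⁰ K₀)⁻¹) :
    u * e ∈ (Ideal.span {A', B', C'} : FractionalIdeal R⁰ K₀)⁻¹ := by
  have hx : algebraMap R K 0 + algebraMap K₀ K u * algebraMap R K A * z ∈
      multiplierSet (Submodule.span R {z', 1}) :=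
    hmult ▸ (mem_multiplierSet_span_pair_one_iff hz hA hroot).mpr ⟨0, u, hu, rfl⟩
  obtain ⟨p', u', hu', hx⟩ := (mem_multiplierSet_span_pair_one_iff hz' hA' hroot').mp hx
  have himag := congrArg (fun y ↦ y - σ y) hx
  simp only [sub_apply_algebraMap_add_mul σ (mul_add_conj_add_eq_zero σ hroot hσz),
    sub_apply_algebraMap_add_mul σ (mul_add_conj_add_eq_zero σ hroot' hσz')] at himag
  have hue : u * e = u' := (algebraMap K₀ K).injective <|
    mul_right_cancel₀ (sqrtDisc_ne_zero σ hA' hroot' hσz') (by rw [map_mul, mul_assoc, he, himag])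
  exact hue ▸ hu'

theorem spanSingleton_mul_inv_eq_of_multiplierSet_eq {A' B' C' : R} {z' : K}
    (hz : z ∉ (algebraMap K₀ K).range) (hz' : z' ∉ (algebraMap K₀ K).range)
    (hA : A ≠ 0) (hA' : A' ≠ 0)
    (hroot : algebraMap R K A * z ^ 2 + algebraMap R K B * z + algebraMap R K C = 0)
    (hroot' : algebraMap R K A' * z' ^ 2 + algebraMap R K B' * z' + algebraMap R K C' = 0)
    (hσz : σ z ≠ z) (hσz' : σ z' ≠ z')
    (hmult : multiplierSet (Submodule.span R {z, 1}) = multiplierSet (Submodule.span R {z', 1}))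
    {e : K₀} (he : algebraMap K₀ K e * sqrtDisc A' B' z' = sqrtDisc A B z) :
    FractionalIdeal.spanSingleton R⁰ e * (Ideal.span {A, B, C} : FractionalIdeal R⁰ K₀)⁻¹ =
      (Ideal.span {A', B', C'} : FractionalIdeal R⁰ K₀)⁻¹ := by
  have he0 : e ≠ 0 := by
    rintro rfl
    exact sqrtDisc_ne_zero σ hA hroot hσz (by simpa using he.symm)
  have he' : algebraMap K₀ K e⁻¹ * sqrtDisc A B z = sqrtDisc A' B' z' := by
    rw [← he, ← mul_assoc, ← map_mul, inv_mul_cancel₀ he0, map_one, one_mul]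
  have hle₁ : FractionalIdeal.spanSingleton R⁰ e *
      (Ideal.span {A, B, C} : FractionalIdeal R⁰ K₀)⁻¹ ≤
      (Ideal.span {A', B', C'} : FractionalIdeal R⁰ K₀)⁻¹ :=
    FractionalIdeal.spanSingleton_mul_le_iff.mpr fun u hu ↦ mul_comm u e ▸
      mul_mem_inv_of_multiplierSet_eq σ hz hz' hA hA' hroot hroot' hσz hσz' hmult he hu
  have hle₂ : FractionalIdeal.spanSingleton R⁰ e⁻¹ *
      (Ideal.span {A', B', C'} : FractionalIdeal R⁰ K₀)⁻¹ ≤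
      (Ideal.span {A, B, C} : FractionalIdeal R⁰ K₀)⁻¹ :=
    FractionalIdeal.spanSingleton_mul_le_iff.mpr fun u hu ↦ mul_comm u e⁻¹ ▸
      mul_mem_inv_of_multiplierSet_eq σ hz' hz hA' hA hroot' hroot hσz' hσz hmult.symm he' hu
  refine le_antisymm hle₁ ?_
  calc _ = FractionalIdeal.spanSingleton R⁰ e * (FractionalIdeal.spanSingleton R⁰ e⁻¹ *
        (Ideal.span {A', B', C'} : FractionalIdeal R⁰ K₀)⁻¹) := by
        rw [← mul_assoc, FractionalIdeal.spanSingleton_mul_spanSingleton, mul_inv_cancel₀ he0,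
          FractionalIdeal.spanSingleton_one, one_mul]
    _ ≤ _ := mul_le_mul_right hle₂ _

end MultiplierRing

theorem eq_one_of_sq_eq_one_of_pos {F : Type*} [Ring F] [NoZeroDivisors F] (φ : F →+* ℝ) {e : F}
    (he : e ^ 2 = 1) (hpos : 0 < φ e) : e = 1 :=
  (sq_eq_one_iff.mp he).resolve_right fun h ↦ by norm_num [h] at hpos

theorem sqrt_disc_quotient_general (K₀ K : Type*) [Field K₀] [NumberField K₀]
    [Field K] [Algebra K₀ K]
    (htr : ∀ v : InfinitePlace K₀, v.IsReal)
    (h2 : Module.finrank K₀ K = 2)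
    (σ : K ≃ₐ[K₀] K) (hσ : σ ≠ AlgEquiv.refl)
    (z₁ z₂ : K) (hz₁ : z₁ ∉ (algebraMap K₀ K).range) (hz₂ : z₂ ∉ (algebraMap K₀ K).range)
    (A₁ B₁ C₁ A₂ B₂ C₂ : 𝓞 K₀) (hA₁ : A₁ ≠ 0) (hA₂ : A₂ ≠ 0)
    (hroot₁ : algebraMap (𝓞 K₀) K A₁ * z₁ ^ 2 + algebraMap (𝓞 K₀) K B₁ * z₁ +
      algebraMap (𝓞 K₀) K C₁ = 0)
    (hroot₂ : algebraMap (𝓞 K₀) K A₂ * z₂ ^ 2 + algebraMap (𝓞 K₀) K B₂ * z₂ +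
      algebraMap (𝓞 K₀) K C₂ = 0)
    (hmult : {x : K | ∀ y ∈ Submodule.span (𝓞 K₀) ({z₁, 1} : Set K),
        x * y ∈ Submodule.span (𝓞 K₀) ({z₁, 1} : Set K)}
      = {x : K | ∀ y ∈ Submodule.span (𝓞 K₀) ({z₂, 1} : Set K),
        x * y ∈ Submodule.span (𝓞 K₀) ({z₂, 1} : Set K)}) :
    ∃ e : K₀,
      algebraMap K₀ K e * (2 * algebraMap (𝓞 K₀) K A₂ * z₂ + algebraMap (𝓞 K₀) K B₂)
        = 2 * algebraMap (𝓞 K₀) K A₁ * z₁ + algebraMap (𝓞 K₀) K B₁ ∧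
      FractionalIdeal.spanSingleton (nonZeroDivisors (𝓞 K₀)) e
        = (Ideal.span ({A₁, B₁, C₁} : Set (𝓞 K₀)) :
            FractionalIdeal (nonZeroDivisors (𝓞 K₀)) K₀) /
          (Ideal.span ({A₂, B₂, C₂} : Set (𝓞 K₀)) :
            FractionalIdeal (nonZeroDivisors (𝓞 K₀)) K₀) ∧
      ((B₁ ^ 2 - 4 * A₁ * C₁ = B₂ ^ 2 - 4 * A₂ * C₂ ∧ ∀ φ : K₀ →+* ℝ, 0 < φ e) →
        (2 * algebraMap (𝓞 K₀) K A₁ * z₁ + algebraMap (𝓞 K₀) K B₁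
            = 2 * algebraMap (𝓞 K₀) K A₂ * z₂ + algebraMap (𝓞 K₀) K B₂ ∧
          Ideal.span ({A₁, B₁, C₁} : Set (𝓞 K₀))
            = Ideal.span ({A₂, B₂, C₂} : Set (𝓞 K₀)))) := by
  have hσz₁ := apply_ne_self_of_notMem_range h2 hσ hz₁
  have hσz₂ := apply_ne_self_of_notMem_range h2 hσ hz₂
  have hδ₂ := sqrtDisc_ne_zero σ hA₂ hroot₂ hσz₂
  obtain ⟨e, he⟩ : sqrtDisc A₁ B₁ z₁ / sqrtDisc A₂ B₂ z₂ ∈ (algebraMap K₀ K).range := by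
    by_contra hnot
    refine apply_ne_self_of_notMem_range h2 hσ hnot ?_
    rw [map_div₀, apply_sqrtDisc σ (mul_add_conj_add_eq_zero σ hroot₁ hσz₁),
      apply_sqrtDisc σ (mul_add_conj_add_eq_zero σ hroot₂ hσz₂), neg_div_neg_eq]
  have he' : algebraMap K₀ K e * sqrtDisc A₂ B₂ z₂ = sqrtDisc A₁ B₁ z₁ := by
    rw [he, div_mul_cancel₀ _ hδ₂]
  have hd₁ := coeIdeal_span_ne_zero_of_mem (K₀ := K₀) (Set.mem_insert A₁ {B₁, C₁}) hA₁
  have hd₂ := coeIdeal_span_ne_zero_of_mem (K₀ := K₀) (Set.mem_insert A₂ {B₂, C₂}) hA₂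
  have hfrac := (mul_inv_eq_iff_eq_mul₀ hd₁).mp
    (spanSingleton_mul_inv_eq_of_multiplierSet_eq σ hz₁ hz₂ hA₁ hA₂ hroot₁ hroot₂ hσz₁ hσz₂
      hmult he')
  rw [← div_eq_inv_mul] at hfrac
  refine ⟨e, he', hfrac, fun ⟨hdisc, hpos⟩ ↦ ?_⟩
  obtain ⟨v⟩ : Nonempty (InfinitePlace K₀) := inferInstance
  have he1 : e = 1 := by
    refine eq_one_of_sq_eq_one_of_pos (InfinitePlace.embedding_of_isReal (htr v)) ?_ (hpos _)
    apply (algebraMap K₀ K).injective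
    apply mul_right_cancel₀ (pow_ne_zero 2 hδ₂)
    rw [map_pow, map_one, one_mul, ← mul_pow, he', sqrtDisc_sq hroot₁, sqrtDisc_sq hroot₂]
    exact congrArg _ hdisc
  subst he1
  rw [map_one, one_mul] at he'
  refine ⟨he'.symm, (FractionalIdeal.coeIdeal_inj (K := K₀)).mp ?_⟩
  rwa [FractionalIdeal.spanSingleton_one, eq_comm, div_eq_one_iff_eq hd₂] at hfrac

/-- Let `z₁, z₂ ∈ K \ K₀` be roots of quadratics `A_i X² + B_i X + C_i ∈ 𝓞 K₀[X]`
whose modules `z_i 𝓞 K₀ + 𝓞 K₀` have the same multiplier ring.  With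
`δ_i = 2 A_i z_i + B_i` and `ε = δ₁/δ₂` one has `ε ∈ K₀` and `ε 𝓞 K₀ = d₁ d₂⁻¹`
where `d_i = (A_i, B_i, C_i)`; if moreover the discriminants are equal and `ε` is
totally positive, then `δ₁ = δ₂` and `d₁ = d₂`. -/
theorem sqrt_disc_quotient (K₀ K : Type*) [Field K₀] [NumberField K₀]
    [Field K] [NumberField K] [Algebra K₀ K]
    (htr : ∀ v : InfinitePlace K₀, v.IsReal)
    (hti : ∀ v : InfinitePlace K, v.IsComplex)
    (h2 : Module.finrank K₀ K = 2)
    (σ : K ≃ₐ[K₀] K) (hσ : σ ≠ AlgEquiv.refl)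
    (z₁ z₂ : K) (hz₁ : z₁ ∉ (algebraMap K₀ K).range) (hz₂ : z₂ ∉ (algebraMap K₀ K).range)
    (A₁ B₁ C₁ A₂ B₂ C₂ : 𝓞 K₀) (hA₁ : A₁ ≠ 0) (hA₂ : A₂ ≠ 0)
    (hroot₁ : algebraMap (𝓞 K₀) K A₁ * z₁ ^ 2 + algebraMap (𝓞 K₀) K B₁ * z₁ +
      algebraMap (𝓞 K₀) K C₁ = 0)
    (hroot₂ : algebraMap (𝓞 K₀) K A₂ * z₂ ^ 2 + algebraMap (𝓞 K₀) K B₂ * z₂ +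
      algebraMap (𝓞 K₀) K C₂ = 0)
    (hmult : {x : K | ∀ y ∈ Submodule.span (𝓞 K₀) ({z₁, 1} : Set K),
        x * y ∈ Submodule.span (𝓞 K₀) ({z₁, 1} : Set K)}
      = {x : K | ∀ y ∈ Submodule.span (𝓞 K₀) ({z₂, 1} : Set K),
        x * y ∈ Submodule.span (𝓞 K₀) ({z₂, 1} : Set K)}) :
    ∃ e : K₀,
      algebraMap K₀ K e * (2 * algebraMap (𝓞 K₀) K A₂ * z₂ + algebraMap (𝓞 K₀) K B₂)
        = 2 * algebraMap (𝓞 K₀) K A₁ * z₁ + algebraMap (𝓞 K₀) K B₁ ∧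
      FractionalIdeal.spanSingleton (nonZeroDivisors (𝓞 K₀)) e
        = (Ideal.span ({A₁, B₁, C₁} : Set (𝓞 K₀)) :
            FractionalIdeal (nonZeroDivisors (𝓞 K₀)) K₀) /
          (Ideal.span ({A₂, B₂, C₂} : Set (𝓞 K₀)) :
            FractionalIdeal (nonZeroDivisors (𝓞 K₀)) K₀) ∧
      ((B₁ ^ 2 - 4 * A₁ * C₁ = B₂ ^ 2 - 4 * A₂ * C₂ ∧ ∀ φ : K₀ →+* ℝ, 0 < φ e) →
        (2 * algebraMap (𝓞 K₀) K A₁ * z₁ + algebraMap (𝓞 K₀) K B₁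
            = 2 * algebraMap (𝓞 K₀) K A₂ * z₂ + algebraMap (𝓞 K₀) K B₂ ∧
          Ideal.span ({A₁, B₁, C₁} : Set (𝓞 K₀))
            = Ideal.span ({A₂, B₂, C₂} : Set (𝓞 K₀)))) :=
  sqrt_disc_quotient_general K₀ K htr h2 σ hσ z₁ z₂ hz₁ hz₂ A₁ B₁ C₁ A₂ B₂ C₂ hA₁ hA₂ hroot₁ hroot₂
    hmult
end

section
/- Let K₀ be a totally real field, K/K₀ a CM extension, O an order of K containing O_{K₀} with conductor f, and n an integral ideal of O_{K₀} coprime to f. Suppose z ∈ K \ K₀ is a root of a quadratic polynomial A X² + B X + C ∈ O_{K₀}[X] with gcd(A,B,C) coprime to n, A coprime to n, and n | C, such that z O_{K₀} + O_{K₀} has multiplier ring O. Then every prime ideal p of O_{K₀} dividing n is non-inert in K/K₀ (i.e., split or ramified), and if p is ramified in K/K₀ then v_p(n) = 1. -/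
/-!
The element `θ = A z` is integral over `𝓞 K₀`, being a root of `X² + B X + A C`, so
`θ (θ + B) = -A C` lies in `p 𝓞 K`, and even in `p² 𝓞 K` when `n ⊆ p²`. On the other hand no
`A z + t` with `t ∈ 𝓞 K₀` lies in `p 𝓞 K`: multiplying by an element `x ∉ p` of the conductor
puts `x (A z + t)` into `p z + p`, and as `1, z` are independent over `K₀` this forces
`x A ∈ p`. Hence `p 𝓞 K` is not prime, and if `p 𝓞 K = P²` then `θ` and `θ + B` both have
`P`-adic valuation at most `1`, whereas their product lies in `p² 𝓞 K = P⁴`.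
-/

open NumberField

theorem Submodule.mem_ideal_smul_span_pair {R M : Type*} [CommSemiring R] [AddCommMonoid M]
    [Module R M] {I : Ideal R} {a b v : M} :
    v ∈ I • span R {a, b} ↔ ∃ c ∈ I, ∃ d ∈ I, c • a + d • b = v := by
  constructor
  · intro hv
    refine smul_induction_on hv (fun r hr m hm => ?_) ?_
    · obtain ⟨c, d, rfl⟩ := mem_span_pair.1 hm
      exact ⟨r * c, I.mul_mem_right c hr, r * d, I.mul_mem_right d hr, by
        simp only [smul_add, mul_smul]⟩
    · rintro _ _ ⟨c, hc, d, hd, rfl⟩ ⟨c', hc', d', hd', rfl⟩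
      exact ⟨c + c', I.add_mem hc hc', d + d', I.add_mem hd hd', by
        simp only [add_smul]; abel⟩
  · rintro ⟨c, hc, d, hd, rfl⟩
    exact add_mem (smul_mem_smul hc (subset_span (by simp)))
      (smul_mem_smul hd (subset_span (by simp)))

section Conductor

variable {R S L : Type*} [CommRing R] [CommRing S] [CommRing L] [Algebra R S] [Algebra R L]
  [Algebra S L] [IsScalarTower R S L]

theorem mul_mem_ideal_smul_of_mem_map {M : Submodule R L} {x : R}
    (hx : ∀ y : S, ∀ w ∈ M, (algebraMap R L x * algebraMap S L y) * w ∈ M)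
    {p : Ideal R} {u : S} (hu : u ∈ p.map (algebraMap R S)) {w : L} (hw : w ∈ M) :
    (algebraMap R L x * algebraMap S L u) * w ∈ p • M := by
  suffices ∀ y : S, (algebraMap R L x * algebraMap S L (y * u)) * w ∈ p • M by
    simpa using this 1
  refine Submodule.span_induction (fun _ ⟨a, ha, hau⟩ y => ?_) (by simp)
    (fun _ _ _ _ hu hv y => by simpa [mul_add, add_mul] using add_mem (hu y) (hv y))
    (fun r u _ hu y => by simpa [mul_assoc] using hu (y * r)) hu
  have := Submodule.smul_mem_smul ha (hx y w hw)
  rw [← hau, map_mul, ← IsScalarTower.algebraMap_apply]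
  convert this using 1
  rw [Algebra.smul_def]
  ring

end Conductor

open Polynomial in
theorem isIntegral_algebraMap_mul_of_quadratic {R S : Type*} [CommRing R] [CommRing S]
    [Algebra R S] {a b c : R} {z : S}
    (h : algebraMap R S a * z ^ 2 + algebraMap R S b * z + algebraMap R S c = 0) :
    IsIntegral R (algebraMap R S a * z) := by
  refine ⟨X ^ 2 + C b * X + C (a * c), ?_, ?_⟩
  · have hdeg : (C b * X + C (a * c)).degree < 2 := degree_linear_le.trans_lt (by norm_num)
    simpa only [add_assoc] using monic_X_pow_add hdeg
  · simp only [eval₂_add, eval₂_mul, eval₂_pow, eval₂_X, eval₂_C, map_mul]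
    linear_combination algebraMap R S a * h

theorem Ideal.mul_notMem_pow_add_succ {R : Type*} [CommRing R] [IsDedekindDomain R]
    {P : Ideal R} [hP : P.IsPrime] {a b : R} {m k : ℕ}
    (ha : a ∉ P ^ (m + 1)) (hb : b ∉ P ^ (k + 1)) : a * b ∉ P ^ (m + k + 1) := by
  rcases eq_or_ne P ⊥ with rfl | hP0
  · simp_all
  have hprime : Prime P := Ideal.prime_of_isPrime hP0 hP
  simp only [← Ideal.dvd_span_singleton, ← Ideal.span_singleton_mul_span_singleton,
    ← emultiplicity_lt_iff_not_dvd, emultiplicity_mul hprime] at ha hb ⊢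
  push_cast at ha hb ⊢
  rw [ENat.lt_add_one_iff (by simp)] at ha hb ⊢
  exact (add_le_add ha hb).trans_eq (by ring)

section RingOfIntegers

variable {K₀ K : Type*} [Field K₀] [Field K] [Algebra K₀ K]

theorem eq_zero_of_algebraMap_mul_eq {z : K} (hz : z ∉ (algebraMap K₀ K).range) {a b : 𝓞 K₀}
    (h : algebraMap (𝓞 K₀) K a * z = algebraMap (𝓞 K₀) K b) : a = 0 := by
  by_contra ha
  refine hz ⟨(b : K₀) / a, ?_⟩
  have ha' : algebraMap (𝓞 K₀) K₀ a ≠ 0 := by simpa using ha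
  rw [map_div₀, div_eq_iff (by simpa using ha'), ← IsScalarTower.algebraMap_apply,
    ← IsScalarTower.algebraMap_apply, ← h, mul_comm]

theorem algebraMap_mul_add_notMem_map {z : K} (hz : z ∉ (algebraMap K₀ K).range)
    {x : 𝓞 K₀} (hx : ∀ y : 𝓞 K, ∀ w ∈ Submodule.span (𝓞 K₀) ({z, 1} : Set K),
      (algebraMap (𝓞 K₀) K x * algebraMap (𝓞 K) K y) * w ∈
        Submodule.span (𝓞 K₀) ({z, 1} : Set K))
    {p : Ideal (𝓞 K₀)} [p.IsPrime] (hxp : x ∉ p) {A : 𝓞 K₀} (hAp : A ∉ p) (t : 𝓞 K₀)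
    {θ : 𝓞 K} (hθ : algebraMap (𝓞 K) K θ = algebraMap (𝓞 K₀) K A * z + algebraMap (𝓞 K₀) K t) :
    θ ∉ p.map (algebraMap (𝓞 K₀) (𝓞 K)) := by
  intro hθp
  obtain ⟨c, hc, d, hd, hcd⟩ := Submodule.mem_ideal_smul_span_pair.1 <|
    mul_mem_ideal_smul_of_mem_map hx hθp (Submodule.subset_span (Set.mem_insert_of_mem z rfl))
  have hxAc : x * A - c = 0 := by
    refine eq_zero_of_algebraMap_mul_eq hz (b := d - x * t) ?_
    simp only [Algebra.smul_def, hθ, map_sub, map_mul] at hcd ⊢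
    linear_combination -hcd
  have hxA : x * A ∈ p := sub_eq_zero.1 hxAc ▸ hc
  exact hAp ((Ideal.IsPrime.mem_or_mem ‹_› hxA).resolve_left hxp)

end RingOfIntegers

theorem splitting_of_primes_dividing_n_general
    (K₀ K : Type*) [Field K₀] [Field K] [NumberField K] [Algebra K₀ K]
    (z : K) (hz : z ∉ (algebraMap K₀ K).range)
    (A B C : 𝓞 K₀)
    (hroot : algebraMap (𝓞 K₀) K A * z ^ 2 + algebraMap (𝓞 K₀) K B * z +
      algebraMap (𝓞 K₀) K C = 0)
    (n : Ideal (𝓞 K₀))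
    -- `n` is coprime to the conductor of the multiplier ring `O` of `b = z 𝓞 K₀ + 𝓞 K₀`:
    (hcond : ∃ x : 𝓞 K₀, (∀ y : 𝓞 K,
        ∀ w ∈ Submodule.span (𝓞 K₀) ({z, 1} : Set K),
          (algebraMap (𝓞 K₀) K x * algebraMap (𝓞 K) K y) * w ∈
            Submodule.span (𝓞 K₀) ({z, 1} : Set K)) ∧
      ∃ y ∈ n, x + y = 1)
    (hAn : Ideal.span {A} ⊔ n = ⊤)
    (hC : C ∈ n) :
    ∀ p : Ideal (𝓞 K₀), p.IsPrime → n ≤ p →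
      ¬ (Ideal.map (algebraMap (𝓞 K₀) (𝓞 K)) p).IsPrime ∧
      ((∃ P : Ideal (𝓞 K), P.IsPrime ∧
          Ideal.map (algebraMap (𝓞 K₀) (𝓞 K)) p = P ^ 2) → ¬ n ≤ p ^ 2) := by
  intro p hp hnp
  obtain ⟨x, hx, y, hyn, hxy⟩ := hcond
  have hxp : x ∉ p := fun hxp => hp.ne_top <| (Ideal.eq_top_iff_one p).2 <|
    hxy ▸ add_mem hxp (hnp hyn)
  have hAp : A ∉ p := fun hAp => hp.ne_top <| top_le_iff.1 <|
    hAn ▸ sup_le ((Ideal.span_singleton_le_iff_mem p).2 hAp) hnp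
  let f := algebraMap (𝓞 K₀) (𝓞 K)
  let θ : 𝓞 K := ⟨_, isIntegral_trans _ (isIntegral_algebraMap_mul_of_quadratic hroot)⟩
  have hθK : algebraMap (𝓞 K) K θ = algebraMap (𝓞 K₀) K A * z := rfl
  have hθ : θ * (θ + f B) = -f (A * C) := by
    apply FaithfulSMul.algebraMap_injective (𝓞 K) K
    simp only [map_mul, map_add, map_neg, hθK, f, ← IsScalarTower.algebraMap_apply]
    linear_combination algebraMap (𝓞 K₀) K A * hroot
  have hθp : θ ∉ p.map f :=
    algebraMap_mul_add_notMem_map hz hx hxp hAp 0 (by rw [hθK, map_zero, add_zero])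
  have hθBp : θ + f B ∉ p.map f := algebraMap_mul_add_notMem_map hz hx hxp hAp B
    (by rw [map_add, hθK, ← IsScalarTower.algebraMap_apply])
  refine ⟨fun hprime => ?_, fun ⟨P, hP, hpP⟩ hnp2 => ?_⟩
  · have : θ * (θ + f B) ∈ p.map f :=
      hθ ▸ neg_mem (Ideal.mem_map_of_mem f (p.mul_mem_left A (hnp hC)))
    exact (hprime.mem_or_mem this).elim hθp hθBp
  · have : θ * (θ + f B) ∈ P ^ 4 := by
      have := Ideal.mem_map_of_mem f ((p ^ 2).mul_mem_left A (hnp2 hC))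
      rw [Ideal.map_pow, hpP, ← pow_mul] at this
      exact hθ ▸ neg_mem this
    rw [hpP] at hθp hθBp
    exact Ideal.mul_notMem_pow_add_succ hθp hθBp (Ideal.pow_le_pow_right (by norm_num) this)

/-- Existence of quadratic polynomials with `n ∣ C`, implication (3) ⇒ (1).  If
`z ∈ K \ K₀` is a root of `A X² + B X + C ∈ 𝓞 K₀[X]` with `(A, B, C)` coprime to
`n`, `A` coprime to `n` and `C ∈ n`, where `n` is coprime to the conductor of the
multiplier ring of `z 𝓞 K₀ + 𝓞 K₀`, then every prime `p ∣ n` is non-inert in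
`K/K₀`, and if `p` is ramified then `v_p(n) = 1`. -/
theorem splitting_of_primes_dividing_n
    (K₀ K : Type*) [Field K₀] [NumberField K₀] [Field K] [NumberField K] [Algebra K₀ K]
    (htr : ∀ v : InfinitePlace K₀, v.IsReal)
    (hti : ∀ v : InfinitePlace K, v.IsComplex)
    (h2 : Module.finrank K₀ K = 2)
    (z : K) (hz : z ∉ (algebraMap K₀ K).range)
    (A B C : 𝓞 K₀) (hA : A ≠ 0)
    (hroot : algebraMap (𝓞 K₀) K A * z ^ 2 + algebraMap (𝓞 K₀) K B * z +
      algebraMap (𝓞 K₀) K C = 0)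
    (n : Ideal (𝓞 K₀)) (hn0 : n ≠ ⊥)
    -- `n` is coprime to the conductor of the multiplier ring `O` of `b = z 𝓞 K₀ + 𝓞 K₀`:
    (hcond : ∃ x : 𝓞 K₀, (∀ y : 𝓞 K,
        ∀ w ∈ Submodule.span (𝓞 K₀) ({z, 1} : Set K),
          (algebraMap (𝓞 K₀) K x * algebraMap (𝓞 K) K y) * w ∈
            Submodule.span (𝓞 K₀) ({z, 1} : Set K)) ∧
      ∃ y ∈ n, x + y = 1)
    (hAn : Ideal.span {A} ⊔ n = ⊤)
    (hgcd : Ideal.span ({A, B, C} : Set (𝓞 K₀)) ⊔ n = ⊤)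
    (hC : C ∈ n) :
    ∀ p : Ideal (𝓞 K₀), p.IsPrime → n ≤ p →
      ¬ (Ideal.map (algebraMap (𝓞 K₀) (𝓞 K)) p).IsPrime ∧
      ((∃ P : Ideal (𝓞 K), P.IsPrime ∧
          Ideal.map (algebraMap (𝓞 K₀) (𝓞 K)) p = P ^ 2) → ¬ n ≤ p ^ 2) :=
  splitting_of_primes_dividing_n_general K₀ K z hz A B C hroot n hcond hAn hC
end
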